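/- A multiring A is a real reduced multiring if and only if the following hold for all a, b, c, d ∈ A: (i) 1 ≠ 0; (ii) a³ = a; (iii) c ∈ a + ab² implies c = a; (iv) c ∈ a² + b² and d ∈ a² + b² implies c = d. -/

import Mathlib

/-! # Multirings (Marshall) -/

universe u v

/-- A multiring in the sense of Marshall: a commutative monoid under `mul` with a
multivalued addition `add : A → A → Set A`. -/
structure Multiring (A : Type u) where
  add : A → A → Set A
  mul : A → A → A
  neg : A → A
  zero : A
  one : A
  add_nonempty : ∀ a b : A, (add a b).Nonempty
  add_comm' : ∀ a b : A, add a b = add b a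
  add_assoc' : ∀ a b c : A, (⋃ x ∈ add b c, add a x) = ⋃ y ∈ add a b, add y c
  add_zero' : ∀ a : A, add a zero = {a}
  zero_mem_add_neg : ∀ a : A, zero ∈ add a (neg a)
  neg_unique : ∀ a b : A, zero ∈ add a b → b = neg a
  mem_add_reverse : ∀ a b c : A, c ∈ add a b → a ∈ add c (neg b)
  mul_comm' : ∀ a b : A, mul a b = mul b a
  mul_assoc' : ∀ a b c : A, mul (mul a b) c = mul a (mul b c)
  mul_one' : ∀ a : A, mul a one = a
  mul_zero' : ∀ a : A, mul a zero = zero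
  mul_mem_add : ∀ d a b c : A, c ∈ add a b → mul d c ∈ add (mul d a) (mul d b)

namespace Multiring

variable {A : Type u} {B : Type v}

/-- `M.SumSq x` : `x` belongs to some finite multivalued sum of squares of `A`. -/
inductive SumSq (M : Multiring A) : A → Prop
  | sq : ∀ a : A, SumSq M (M.mul a a)
  | step : ∀ a b c : A, SumSq M b → c ∈ M.add (M.mul a a) b → SumSq M c

/-- A real reduced multiring: `−1 ∉ ΣA²`, `a³ = a`, `a + ab² = {a}`, and
`a² + b²` is a singleton. -/
def IsRealReduced (M : Multiring A) : Prop :=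
  ¬ M.SumSq (M.neg M.one) ∧
  (∀ a : A, M.mul a (M.mul a a) = a) ∧
  (∀ a b : A, M.add a (M.mul a (M.mul b b)) = {a}) ∧
  (∀ a b : A, ∃! c : A, c ∈ M.add (M.mul a a) (M.mul b b))

/-- Quadratically tuned multiring: axioms QT0–QT5. -/
def IsQT (M : Multiring A) : Prop :=
  -- QT0
  (∀ a : A, M.mul a (M.mul a a) = a) ∧
  -- QT1
  (∀ a : A, M.one ∈ M.add M.one a) ∧
  -- QT2
  (∀ a b c d e : A, M.mul a d = M.mul b d → M.mul a e = M.mul b e →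
    c ∈ M.add (M.mul (M.mul c c) d) (M.mul (M.mul c c) e) → M.mul a c = M.mul b c) ∧
  -- QT3
  (∀ a b c d e : A,
    e ∈ M.add (M.mul (M.mul (M.mul c e) (M.mul c e)) a)
              (M.mul (M.mul (M.mul d e) (M.mul d e)) b) →
    e ∈ M.add (M.mul (M.mul e e) a) (M.mul (M.mul e e) b)) ∧
  -- QT4
  (∀ a b c : A, a ∈ M.add (M.mul (M.mul a a) b) (M.mul (M.mul a a) c) →
    M.mul a a ∈ M.add (M.mul (M.mul a b) (M.mul a b)) (M.mul (M.mul a c) (M.mul a c))) ∧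
  -- QT5
  (∀ a b e : A, e ∈ M.add a b ↔
    (e ∈ M.add (M.mul a (M.mul e e)) (M.mul b (M.mul e e)) ∧
     M.neg a ∈ M.add (M.mul b (M.mul a a)) (M.neg (M.mul e (M.mul a a))) ∧
     M.neg b ∈ M.add (M.mul a (M.mul b b)) (M.neg (M.mul e (M.mul b b)))))

/-- Morphism of multirings. -/
def IsHom (M : Multiring A) (N : Multiring B) (f : A → B) : Prop :=
  f M.zero = N.zero ∧ f M.one = N.one ∧
  (∀ a : A, f (M.neg a) = N.neg (f a)) ∧
  (∀ a b : A, f (M.mul a b) = N.mul (f a) (f b)) ∧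
  (∀ a b c : A, c ∈ M.add a b → f c ∈ N.add (f a) (f b))

/-- Isomorphism of multirings: a bijective morphism whose inverse is also a morphism. -/
def IsIso (M : Multiring A) (N : Multiring B) (f : A → B) : Prop :=
  IsHom M N f ∧ ∃ g : B → A, IsHom N M g ∧ (∀ a, g (f a) = a) ∧ (∀ b, f (g b) = b)

end Multiring

/-! ## The multifield `Q₂ = {−1,0,1}` (realized on `SignType`) -/

/-- Multivalued addition of `Q₂`: `a+0={a}`, `1+1={1}`, `(−1)+(−1)={−1}`,
`1+(−1)={−1,0,1}`. -/
def Q2add (a b : SignType) : Set SignType :=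
  if a = 0 then {b} else if b = 0 then {a} else if a = b then {a} else Set.univ

namespace Multiring

variable {A : Type u}

/-- A point of the real spectrum: a multiring morphism `σ : A → Q₂`. -/
def IsSperMap (M : Multiring A) (σ : A → SignType) : Prop :=
  σ M.zero = 0 ∧ σ M.one = 1 ∧
  (∀ a : A, σ (M.neg a) = -σ a) ∧
  (∀ a b : A, σ (M.mul a b) = σ a * σ b) ∧
  (∀ a b c : A, c ∈ M.add a b → σ c ∈ Q2add (σ a) (σ b))

/-- `Sper(A)`, the real spectrum of the multiring `A`. -/
def Sper (M : Multiring A) : Type u := {σ : A → SignType // M.IsSperMap σ}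

/-- A preordering of a multiring. -/
def IsPreordering (M : Multiring A) (T : Set A) : Prop :=
  (∀ a ∈ T, ∀ b ∈ T, M.add a b ⊆ T) ∧
  (∀ a ∈ T, ∀ b ∈ T, M.mul a b ∈ T) ∧
  (∀ a : A, M.mul a a ∈ T)

/-- `X_T = {σ ∈ Sper(A) : σ(t) ∈ {0,1} for all t ∈ T}`. -/
def XT (M : Multiring A) (T : Set A) : Type u :=
  {σ : A → SignType // M.IsSperMap σ ∧ ∀ t ∈ T, σ t = 0 ∨ σ t = 1}

/-- The evaluation map `a ↦ ā`, `ā(σ) = σ(a)`, into `Q₂^{X_T}`. -/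
def evalT (M : Multiring A) (T : Set A) (a : A) : XT M T → SignType :=
  fun σ => σ.1 a

/-- The carrier of `Q_T(A)`: the image of `A` in `Q₂^{X_T}`. -/
def QTcar (M : Multiring A) (T : Set A) : Set (XT M T → SignType) :=
  Set.range (evalT M T)

/-- The evaluation map `a ↦ ā` viewed as a map onto `Q_T(A)`. -/
def evalQ (M : Multiring A) (T : Set A) (a : A) : QTcar M T :=
  ⟨evalT M T a, a, rfl⟩

/-- Evaluation `a ↦ â` into `Q₂^{Sper(A)}`. -/
def hat (M : Multiring A) (a : A) : M.Sper → SignType := fun σ => σ.1 a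

end Multiring

/-! ## Abstract real spectra -/

/-- Representation: `D(a,b)` for a set `G` of functions `X → {−1,0,1}`. -/
def Dfun {X : Type u} (G : Set (X → SignType)) (a b : X → SignType) : Set (X → SignType) :=
  {c | c ∈ G ∧ ∀ x : X, 0 < a x * c x ∨ 0 < b x * c x ∨ c x = 0}

/-- Transversal representation `Dᵗ(a,b)`. -/
def Dtfun {X : Type u} (G : Set (X → SignType)) (a b : X → SignType) : Set (X → SignType) :=
  {c | c ∈ G ∧ ∀ x : X, 0 < a x * c x ∨ 0 < b x * c x ∨ (c x = 0 ∧ b x = -a x)}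

/-- An abstract real spectrum (space of signs) on a set `X`. -/
structure ARS (X : Type u) where
  G : Set (X → SignType)
  nonemptyX : Nonempty X
  one_mem : (fun _ => (1 : SignType)) ∈ G
  zero_mem : (fun _ => (0 : SignType)) ∈ G
  negOne_mem : (fun _ => (-1 : SignType)) ∈ G
  mul_mem : ∀ {a b : X → SignType}, a ∈ G → b ∈ G → (fun x => a x * b x) ∈ G
  separates : ∀ x y : X, x ≠ y → ∃ a ∈ G, a x ≠ a y
  ax2 : ∀ P : Set (X → SignType), P ⊆ G → (fun _ => (1 : SignType)) ∈ P →
    (∀ {a b : X → SignType}, a ∈ P → b ∈ P → (fun x => a x * b x) ∈ P) →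
    (∀ a ∈ G, a ∈ P ∨ (fun x => -(a x)) ∈ P) →
    (fun _ => (-1 : SignType)) ∉ P →
    (∀ {a b : X → SignType}, a ∈ P → b ∈ P → Dfun G a b ⊆ P) →
    (∀ {a b : X → SignType}, a ∈ G → b ∈ G →
      (fun x => a x * b x) ∈ P → (fun x => -(a x * b x)) ∈ P →
      (a ∈ P ∧ (fun x => -(a x)) ∈ P) ∨ (b ∈ P ∧ (fun x => -(b x)) ∈ P)) →
    ∃! x : X, P = {a | a ∈ G ∧ a x ≤ 0}
  ax3a : ∀ a b c p q : X → SignType, a ∈ G → b ∈ G → c ∈ G →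
    q ∈ Dfun G b c → p ∈ Dfun G a q → ∃ r ∈ Dfun G a b, p ∈ Dfun G r c
  ax3b : ∀ a b : X → SignType, a ∈ G → b ∈ G → (Dtfun G a b).Nonempty

/-! ## Ternary semigroups, real semigroups and pre-real semigroups -/

/-- The raw data of a ternary structure with a ternary relation `D`
(`D a b c` means `a ∈ D(b,c)`). -/
structure TernaryStruct (G : Type u) where
  mul : G → G → G
  one : G
  zero : G
  negOne : G
  D : G → G → G → Prop

namespace TernaryStruct

variable {G : Type u}

def neg (S : TernaryStruct G) (a : G) : G := S.mul S.negOne a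

/-- Transversal representation: `a ∈ Dᵗ(b,c) ⟺ a ∈ D(b,c) ∧ −b ∈ D(−a,c) ∧ −c ∈ D(b,−a)`. -/
def Dt (S : TernaryStruct G) (a b c : G) : Prop :=
  S.D a b c ∧ S.D (S.neg b) (S.neg a) c ∧ S.D (S.neg c) b (S.neg a)

end TernaryStruct

/-- Axioms of a ternary semigroup together with [RS0]-[RS6] and [RS8]. -/
structure PreRealSemigroupAux (G : Type u) extends TernaryStruct G where
  mul_comm' : ∀ a b : G, mul a b = mul b a
  mul_assoc' : ∀ a b c : G, mul (mul a b) c = mul a (mul b c)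
  mul_one' : ∀ a : G, mul a one = a
  cube : ∀ a : G, mul a (mul a a) = a
  negOne_ne_one : negOne ≠ one
  negOne_mul_negOne : mul negOne negOne = one
  mul_zero' : ∀ a : G, mul a zero = zero
  neg_fix : ∀ a : G, mul negOne a = a → a = zero
  rs0 : ∀ a b c : G, D c a b ↔ D c b a
  rs1 : ∀ a b : G, D a a b
  rs2 : ∀ a b c d : G, D a b c → D (mul a d) (mul b d) (mul c d)
  rs3 : ∀ a b c d e : G, toTernaryStruct.Dt a b c → toTernaryStruct.Dt c d e →
    ∃ x : G, toTernaryStruct.Dt x b d ∧ toTernaryStruct.Dt a x e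
  rs4 : ∀ a b c d e : G, D e (mul (mul c c) a) (mul (mul d d) b) → D e a b
  rs5 : ∀ a b c d e : G, mul a d = mul b d → mul a e = mul b e → D c d e → mul a c = mul b c
  rs6 : ∀ a b c : G, D c a b →
    toTernaryStruct.Dt c (mul (mul c c) a) (mul (mul c c) b)
  rs8 : ∀ a b c : G, D a b c → D (mul a a) (mul b b) (mul c c)

/-- A real semigroup: [RS0]-[RS8]. -/
structure RealSemigroup (G : Type u) extends PreRealSemigroupAux G where
  rs7 : ∀ a b x : G, toTernaryStruct.Dt x a (toTernaryStruct.neg b) →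
    toTernaryStruct.Dt x b (toTernaryStruct.neg a) → a = b

/-- A pre-real semigroup: [RS0]-[RS6], [RS8] and [RS7']. -/
structure PreRealSemigroup (G : Type u) extends PreRealSemigroupAux G where
  rs7' : ∀ x a : G, toTernaryStruct.Dt x zero a ↔ x = a

/-- Morphism of pre-real semigroups: preserves `·`, `1`, `0`, `−1` and `D`. -/
def IsPRSHom {G : Type u} {H : Type v} (S : PreRealSemigroup G) (T : PreRealSemigroup H)
    (f : G → H) : Prop :=
  f S.one = T.one ∧ f S.zero = T.zero ∧ f S.negOne = T.negOne ∧
  (∀ a b : G, f (S.mul a b) = T.mul (f a) (f b)) ∧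
  (∀ a b c : G, S.D a b c → T.D (f a) (f b) (f c))

/-! ## Quadratic forms and isometry -/

/-- Weak isometry of forms (as lists of entries) over a multiring. -/
inductive WeakIsom {A : Type u} (M : Multiring A) : List A → List A → Prop
  | one (a : A) : WeakIsom M [a] [a]
  | two (a b c d : A) : M.mul a b = M.mul c d → (M.add a b ∩ M.add c d).Nonempty →
      WeakIsom M [a, b] [c, d]
  | step (a₁ b₁ x y : A) (as bs zs : List A) :
      2 ≤ as.length → as.length = bs.length → zs.length + 1 = as.length →
      WeakIsom M [a₁, x] [b₁, y] → WeakIsom M as (x :: zs) → WeakIsom M bs (y :: zs) →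
      WeakIsom M (a₁ :: as) (b₁ :: bs)

/-- Strong isometry of forms (as lists of entries) over a multiring. -/
inductive StrongIsom {A : Type u} (M : Multiring A) : List A → List A → Prop
  | one (a : A) : StrongIsom M [a] [a]
  | two (a b c d : A) : M.mul a b = M.mul c d → M.add a b = M.add c d →
      StrongIsom M [a, b] [c, d]
  | step (a₁ b₁ x y : A) (as bs zs : List A) :
      2 ≤ as.length → as.length = bs.length → zs.length + 1 = as.length →
      StrongIsom M [a₁, x] [b₁, y] → StrongIsom M as (x :: zs) → StrongIsom M bs (y :: zs) →
      StrongIsom M (a₁ :: as) (b₁ :: bs)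

/-!
Under (iii) every element of `1 + s`, for `s` a sum of squares, equals `1`: by associativity
of the multivalued sum, `1 + (a² + s')` is covered by the sums `y + s'` with `y ∈ 1 + a² = {1}`.
Since `0 ∈ 1 + (−1)`, `−1 ∈ ΣA²` would force `1 = 0`. Conversely, if `1 = 0` then
`−1 = −0 = 0 = 0²`. The remaining conditions are restatements of `a + ab² = {a}` and
`∃! c, c ∈ a² + b²`, using that multivalued sums are nonempty.
-/

namespace Multiring

variable {A : Type u} (M : Multiring A)

theorem neg_zero : M.neg M.zero = M.zero :=
  (M.neg_unique M.zero M.zero (by rw [M.add_zero']; rfl)).symm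

theorem one_mul (a : A) : M.mul M.one a = a := by
  rw [M.mul_comm', M.mul_one']

theorem exists_mem_add_of_mem_add_of_mem_add {a b c d x : A} (hc : c ∈ M.add a b)
    (hx : x ∈ M.add d c) : ∃ y ∈ M.add d a, x ∈ M.add y b := by
  have hx' : x ∈ ⋃ y ∈ M.add a b, M.add d y := Set.mem_biUnion hc hx
  rw [M.add_assoc'] at hx'
  simpa only [Set.mem_iUnion, exists_prop] using hx'

theorem add_eq_singleton_iff {a b c : A} : M.add a b = {c} ↔ ∀ x ∈ M.add a b, x = c := by
  rw [← (M.add_nonempty a b).subset_singleton_iff, Set.subset_singleton_iff]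

theorem existsUnique_mem_add_iff {a b : A} :
    (∃! c, c ∈ M.add a b) ↔ ∀ c d : A, c ∈ M.add a b → d ∈ M.add a b → c = d := by
  constructor
  · rintro ⟨e, -, he⟩ c d hc hd
    rw [he c hc, he d hd]
  · intro h
    obtain ⟨c, hc⟩ := M.add_nonempty a b
    exact ⟨c, hc, fun d hd => h d c hd hc⟩

theorem eq_one_of_mem_one_add_sumSq (h : ∀ b c : A, c ∈ M.add M.one (M.mul b b) → c = M.one)
    {s : A} (hs : M.SumSq s) : ∀ c ∈ M.add M.one s, c = M.one := by
  induction hs with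
  | sq b => exact h b
  | step a s' c _ hc ih =>
    intro x hx
    obtain ⟨y, hy, hxy⟩ := M.exists_mem_add_of_mem_add_of_mem_add hc hx
    rw [h a y hy] at hxy
    exact ih x hxy

theorem not_sumSq_neg_one (h : ∀ a b c : A, c ∈ M.add a (M.mul a (M.mul b b)) → c = a)
    (hne : M.one ≠ M.zero) : ¬ M.SumSq (M.neg M.one) := by
  intro hs
  have h_one : ∀ b c : A, c ∈ M.add M.one (M.mul b b) → c = M.one := fun b c hc =>
    h M.one b c (by rwa [M.one_mul])
  exact hne (M.eq_one_of_mem_one_add_sumSq h_one hs _ (M.zero_mem_add_neg M.one)).symm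

theorem one_ne_zero_of_not_sumSq_neg_one (h : ¬ M.SumSq (M.neg M.one)) : M.one ≠ M.zero := by
  intro h10
  apply h
  rw [h10, M.neg_zero, ← M.mul_zero' M.zero]
  exact SumSq.sq M.zero

end Multiring

/-- A multiring `A` is real reduced iff for all `a,b,c,d`:
(i) `1 ≠ 0`; (ii) `a³ = a`; (iii) `c ∈ a + ab²` implies `c = a`;
(iv) `c ∈ a² + b²` and `d ∈ a² + b²` implies `c = d`. -/
theorem statement_3 {A : Type u} (M : Multiring A) :
    M.IsRealReduced ↔
      (M.one ≠ M.zero ∧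
       (∀ a : A, M.mul a (M.mul a a) = a) ∧
       (∀ a b c : A, c ∈ M.add a (M.mul a (M.mul b b)) → c = a) ∧
       (∀ a b c d : A, c ∈ M.add (M.mul a a) (M.mul b b) →
          d ∈ M.add (M.mul a a) (M.mul b b) → c = d)) := by
  constructor
  · rintro ⟨h_sumSq, h_cube, h_single, h_unique⟩
    exact ⟨M.one_ne_zero_of_not_sumSq_neg_one h_sumSq, h_cube,
      fun a b => M.add_eq_singleton_iff.1 (h_single a b),
      fun a b => M.existsUnique_mem_add_iff.1 (h_unique a b)⟩
  · rintro ⟨h_ne, h_cube, h_single, h_unique⟩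
    exact ⟨M.not_sumSq_neg_one h_single h_ne, h_cube,
      fun a b => M.add_eq_singleton_iff.2 (h_single a b),
      fun a b => M.existsUnique_mem_add_iff.2 (h_unique a b)⟩
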